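/- Under the hypotheses of the isospectrality theorem for minimal Riemannian Legendre foliations on compact Sasakian space forms: if the horizontal distribution φ(L) ⊕ [ξ] of 𝓛 is integrable, then so is that of 𝓛₀; and if 𝓛 is totally geodesic, then so is 𝓛₀. -/
import Mathlib


open MeasureTheory

lemma cont_nonneg_integral_zero {M : Type*} [MeasurableSpace M] [TopologicalSpace M]
    (μ : Measure M) [μ.IsOpenPosMeasure] (f : M → ℝ) (hc : Continuous f)
    (hnn : ∀ x, 0 ≤ f x) (hi : MeasureTheory.Integrable f μ)
    (h0 : ∫ x, f x ∂μ = 0) : ∀ x, f x = 0 := by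
  have hae : f =ᵐ[μ] 0 :=
    (MeasureTheory.integral_eq_zero_iff_of_nonneg (fun x => hnn x) hi).mp h0
  have := (hc.ae_eq_iff_eq μ continuous_const).mp hae
  intro x; exact congrFun this x

/-- Under the hypotheses of the isospectrality theorem for minimal Riemannian Legendre
foliations on compact Sasakian space forms — in particular the equalities
`∫‖A‖² = ∫‖A₀‖²` and `∫‖T‖² = ∫‖T₀‖²` — if the horizontal distribution of `𝓛` is
integrable (`‖A‖² ≡ 0`) then so is that of `𝓛₀`, and if `𝓛` is totally geodesic
(`‖T‖² ≡ 0`) then so is `𝓛₀`. -/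
theorem isospectral_integrable_and_totally_geodesic
    {M M₀ : Type*} [MeasurableSpace M] [MeasurableSpace M₀]
    [TopologicalSpace M] [TopologicalSpace M₀]
    (μ : Measure M) (μ₀ : Measure M₀)
    [μ.IsOpenPosMeasure] [μ₀.IsOpenPosMeasure]
    (A2 T2 : M → ℝ) (A2₀ T2₀ : M₀ → ℝ)
    (hA2c : Continuous A2) (hT2c : Continuous T2)
    (hA2₀c : Continuous A2₀) (hT2₀c : Continuous T2₀)
    (hA2 : ∀ x, 0 ≤ A2 x) (hT2 : ∀ x, 0 ≤ T2 x)
    (hA2₀ : ∀ x, 0 ≤ A2₀ x) (hT2₀ : ∀ x, 0 ≤ T2₀ x)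
    (hA2i : Integrable A2 μ) (hT2i : Integrable T2 μ)
    (hA2₀i : Integrable A2₀ μ₀) (hT2₀i : Integrable T2₀ μ₀)
    (hintA : ∫ x, A2 x ∂μ = ∫ x, A2₀ x ∂μ₀)
    (hintT : ∫ x, T2 x ∂μ = ∫ x, T2₀ x ∂μ₀) :
    ((∀ x, A2 x = 0) → ∀ x, A2₀ x = 0) ∧
    ((∀ x, T2 x = 0) → ∀ x, T2₀ x = 0) := by
  constructor
  · intro hz
    have h0 : ∫ x, A2₀ x ∂μ₀ = 0 := by
      rw [← hintA]; simp [hz]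
    exact cont_nonneg_integral_zero μ₀ A2₀ hA2₀c hA2₀ hA2₀i h0
  · intro hz
    have h0 : ∫ x, T2₀ x ∂μ₀ = 0 := by
      rw [← hintT]; simp [hz]
    exact cont_nonneg_integral_zero μ₀ T2₀ hT2₀c hT2₀ hT2₀i h0
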